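/- Let G be a connected signed graph and let a, b, c be distinct vertices forming a positive triangle (the three edges ab, bc, ca exist and carry an even number of negative signs) such that G−{a,b,c} is connected and nonempty. Then β(G) − pt(G) ≥ β(G−{a,b,c}) − pt(G−{a,b,c}) + 3/4. -/

import Mathlib

/-- Sign convention: `true` = positive edge, `false` = negative edge.
An edge `e` is *consistent* with the partition `(A, Aᶜ)` of the vertex set if it is
positive when both endpoints lie on the same side and negative otherwise. -/
def SignConsistent {V : Type*} (sign : Sym2 V → Bool) (A : Set V) (e : Sym2 V) : Prop :=
  ∀ u v : V, e = s(u, v) → (sign e = true ↔ (u ∈ A ↔ v ∈ A))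

/-- The number of edges of the balanced subgraph induced by the partition `(A, Aᶜ)`. -/
noncomputable def balCount {V : Type*} (G : SimpleGraph V) (sign : Sym2 V → Bool)
    (A : Set V) : ℕ :=
  {e | e ∈ G.edgeSet ∧ SignConsistent sign A e}.ncard

/-- `beta G sign` = β(G): the maximum number of edges of a balanced subgraph of the
signed graph `(G, sign)`. -/
noncomputable def beta {V : Type*} (G : SimpleGraph V) (sign : Sym2 V → Bool) : ℕ :=
  sSup {n | ∃ A : Set V, n = balCount G sign A}

/-- The Poljak–Turzík bound `pt G = m/2 + (n − t)/4`, where `m` is the number of edges,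
`n` the number of vertices and `t` the number of connected components. -/
noncomputable def pt {V : Type*} (G : SimpleGraph V) : ℚ :=
  (G.edgeSet.ncard : ℚ) / 2 +
    ((Nat.card V : ℚ) - (Nat.card G.ConnectedComponent : ℚ)) / 4

/-- β of the signed subgraph induced on the vertex set `U`. -/
noncomputable def betaOn {V : Type*} (G : SimpleGraph V) (sign : Sym2 V → Bool)
    (U : Set V) : ℕ :=
  beta (G.induce U) (fun e => sign (Sym2.map Subtype.val e))

/-- `pt` of the subgraph induced on the vertex set `U`. -/
noncomputable def ptOn {V : Type*} (G : SimpleGraph V) (U : Set V) : ℚ :=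
  pt (G.induce U)

/-- The signed graph `(G, sign)` is balanced: some partition `(A, Aᶜ)` is consistent
with every edge. -/
def IsBalanced {V : Type*} (G : SimpleGraph V) (sign : Sym2 V → Bool) : Prop :=
  ∃ A : Set V, ∀ u v : V, G.Adj u v → (sign s(u, v) = true ↔ (u ∈ A ↔ v ∈ A))

/-- `a`, `b`, `c` form a positive triangle: all three edges exist and the number of
negative edges among them is even. -/
def PositiveTriangle {V : Type*} (G : SimpleGraph V) (sign : Sym2 V → Bool)
    (a b c : V) : Prop :=
  G.Adj a b ∧ G.Adj b c ∧ G.Adj c a ∧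
    Even ((if sign s(a, b) then 0 else 1) + (if sign s(b, c) then 0 else 1) +
      (if sign s(c, a) then 0 else 1))

/-- `X` is (the vertex set of) a connected component of `G − S`. -/
def IsCompOf {V : Type*} (G : SimpleGraph V) (S X : Set V) : Prop :=
  Disjoint X S ∧ (G.induce X).Connected ∧
    ∀ x ∈ X, ∀ y : V, G.Adj x y → y ∉ S → y ∈ X

/-- The neighborhood of a vertex set `X`. -/
def nbhd {V : Type*} (G : SimpleGraph V) (X : Set V) : Set V :=
  {v | v ∉ X ∧ ∃ x ∈ X, G.Adj x v}

/-! Let `T = {a, b, c}` and let `k` be the number of edges between `T` and the rest. Extend a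
partition of `G − T` attaining β in the two ways that make the (balanced) triangle consistent;
they differ by switching `T` to the other side. Both keep the three triangle edges and the
consistent edges of `G − T`, and each edge between `T` and the rest is consistent with exactly
one of them, so `β(G) ≥ β(G − T) + 3 + k / 2`. Since `G` has `3 + k` more edges, three more
vertices and at least one component, `pt(G) ≤ pt(G − T) + (3 + k) / 2 + 3 / 4`. -/

open scoped symmDiff

section SignedGraph

variable {V : Type*} (G : SimpleGraph V) (sign : Sym2 V → Bool)

lemma signConsistent_mk_iff (A : Set V) (u v : V) :
    SignConsistent sign A s(u, v) ↔ (sign s(u, v) = true ↔ (u ∈ A ↔ v ∈ A)) := by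
  refine ⟨fun h ↦ h u v rfl, fun h x y hxy ↦ ?_⟩
  rcases Sym2.eq_iff.mp hxy with ⟨rfl, rfl⟩ | ⟨rfl, rfl⟩
  · exact h
  · rwa [iff_comm (a := v ∈ A)]

lemma signConsistent_symmDiff_mk_iff (A S : Set V) (u v : V) :
    SignConsistent sign (A ∆ S) s(u, v) ↔
      (SignConsistent sign A s(u, v) ↔ (u ∈ S ↔ v ∈ S)) := by
  simp only [signConsistent_mk_iff, Set.mem_symmDiff]
  tauto

lemma signConsistent_map_val_iff {U : Set V} (A : Set V) (e : Sym2 U) :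
    SignConsistent (fun e ↦ sign (e.map Subtype.val)) (Subtype.val ⁻¹' A) e ↔
      SignConsistent sign A (e.map Subtype.val) := by
  induction e using Sym2.inductionOn with
  | _ u v => simp only [signConsistent_mk_iff, Sym2.map_mk, Set.mem_preimage]

lemma image_edgeSet_induce (U : Set V) :
    Sym2.map Subtype.val '' (G.induce U).edgeSet = {e | e ∈ G.edgeSet ∧ ∀ v ∈ e, v ∈ U} := by
  ext e
  induction e using Sym2.inductionOn with
  | _ u v =>
    constructor
    · rintro ⟨e', he', hmap⟩
      induction e' using Sym2.inductionOn with
      | _ x y =>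
        rw [← hmap]
        exact ⟨he', by simp⟩
    · rintro ⟨huv, hU⟩
      exact ⟨s(⟨u, hU u (Sym2.mem_mk_left u v)⟩, ⟨v, hU v (Sym2.mem_mk_right u v)⟩), huv, rfl⟩

lemma ncard_edgeSet_induce (U : Set V) :
    (G.induce U).edgeSet.ncard = {e | e ∈ G.edgeSet ∧ ∀ v ∈ e, v ∈ U}.ncard := by
  rw [← image_edgeSet_induce, Set.ncard_image_of_injective _
    (Sym2.map.injective Subtype.val_injective)]

lemma balCount_induce (U A : Set V) :
    balCount (G.induce U) (fun e ↦ sign (e.map Subtype.val)) (Subtype.val ⁻¹' A) =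
      {e | e ∈ G.edgeSet ∧ (∀ v ∈ e, v ∈ U) ∧ SignConsistent sign A e}.ncard := by
  have hsep : {e | e ∈ (G.induce U).edgeSet ∧
      SignConsistent (fun e ↦ sign (e.map Subtype.val)) (Subtype.val ⁻¹' A) e} =
      (G.induce U).edgeSet ∩ Sym2.map Subtype.val ⁻¹' {e | SignConsistent sign A e} := by
    ext e
    exact and_congr_right fun _ ↦ signConsistent_map_val_iff sign A e
  rw [balCount, hsep, ← Set.ncard_image_of_injective _ (Sym2.map.injective Subtype.val_injective),
    Set.image_inter_preimage, image_edgeSet_induce]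
  congr 1
  ext e
  simp only [Set.mem_inter_iff, Set.mem_ofPred_eq, and_assoc]

lemma isBalanced_induce_iff (S : Set V) :
    IsBalanced (G.induce S) (fun e ↦ sign (e.map Subtype.val)) ↔
      ∃ A : Set V, ∀ u ∈ S, ∀ v ∈ S, G.Adj u v → (sign s(u, v) = true ↔ (u ∈ A ↔ v ∈ A)) := by
  constructor
  · rintro ⟨A, hA⟩
    refine ⟨Subtype.val '' A, fun u hu v hv huv ↦ ?_⟩
    simpa [hu, hv] using hA ⟨u, hu⟩ ⟨v, hv⟩ huv
  · rintro ⟨A, hA⟩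
    exact ⟨Subtype.val ⁻¹' A, fun u v huv ↦ hA u u.2 v v.2 huv⟩

lemma ncard_edgeSet_sep_eq_sum [Fintype G.edgeSet] (P : Sym2 V → Prop) [DecidablePred P] :
    {e | e ∈ G.edgeSet ∧ P e}.ncard = ∑ e ∈ G.edgeFinset, if P e then 1 else 0 := by
  simp only [← Finset.card_filter, ← Set.ncard_coe_finset, Finset.coe_filter, G.mem_edgeFinset]

section Finite

variable [Finite V]

lemma bddAbove_balCount : BddAbove {n | ∃ A : Set V, n = balCount G sign A} := by
  refine ⟨G.edgeSet.ncard, ?_⟩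
  rintro n ⟨A, rfl⟩
  exact Set.ncard_le_ncard (fun e he ↦ he.1) (Set.toFinite _)

lemma balCount_le_beta (A : Set V) : balCount G sign A ≤ beta G sign :=
  le_csSup (bddAbove_balCount G sign) ⟨A, rfl⟩

lemma exists_balCount_eq_beta : ∃ A : Set V, balCount G sign A = beta G sign :=
  (Nat.sSup_mem (⟨_, ∅, rfl⟩ : {n | ∃ A : Set V, n = balCount G sign A}.Nonempty)
    (bddAbove_balCount G sign)).imp fun _ ↦ Eq.symm

lemma le_balCount_add_balCount_symmDiff (S A : Set V)
    (hA : ∀ u ∈ S, ∀ v ∈ S, G.Adj u v → (sign s(u, v) = true ↔ (u ∈ A ↔ v ∈ A))) :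
    2 * {e | e ∈ G.edgeSet ∧ (∀ v ∈ e, v ∈ Sᶜ) ∧ SignConsistent sign A e}.ncard +
        G.edgeSet.ncard + {e | e ∈ G.edgeSet ∧ ∀ v ∈ e, v ∈ S}.ncard ≤
      balCount G sign A + balCount G sign (A ∆ S) +
        {e | e ∈ G.edgeSet ∧ ∀ v ∈ e, v ∈ Sᶜ}.ncard := by
  classical
  have := Fintype.ofFinite V
  have hE : G.edgeSet.ncard = ∑ e ∈ G.edgeFinset, 1 := by
    rw [← G.coe_edgeFinset, Set.ncard_coe_finset, Finset.card_eq_sum_ones]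
  simp only [balCount, hE, ncard_edgeSet_sep_eq_sum, Finset.mul_sum, ← Finset.sum_add_distrib]
  refine Finset.sum_le_sum fun e he ↦ ?_
  induction e using Sym2.inductionOn with
  | _ u v =>
    rw [G.mem_edgeFinset, SimpleGraph.mem_edgeSet] at he
    simp only [signConsistent_symmDiff_mk_iff, Sym2.mem_iff, forall_eq_or_imp, forall_eq,
      Set.mem_compl_iff]
    have hS : u ∈ S → v ∈ S → SignConsistent sign A s(u, v) :=
      fun hu hv ↦ (signConsistent_mk_iff sign A u v).mpr (hA u hu v hv he)
    by_cases hu : u ∈ S <;> by_cases hv : v ∈ S <;> by_cases hc : SignConsistent sign A s(u, v) <;>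
      simp_all

theorem two_mul_betaOn_compl_add_le (S : Set V)
    (hS : IsBalanced (G.induce S) (fun e ↦ sign (e.map Subtype.val))) :
    2 * betaOn G sign Sᶜ + G.edgeSet.ncard + {e | e ∈ G.edgeSet ∧ ∀ v ∈ e, v ∈ S}.ncard ≤
      2 * beta G sign + (G.induce Sᶜ).edgeSet.ncard := by
  obtain ⟨A₀, hA₀⟩ := (isBalanced_induce_iff G sign S).mp hS
  obtain ⟨B, hB⟩ := exists_balCount_eq_beta (G.induce Sᶜ) (fun e ↦ sign (e.map Subtype.val))
  set A : Set V := Subtype.val '' B ∪ (A₀ ∩ S)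
  have hAB : Subtype.val ⁻¹' A = B := by
    ext ⟨v, hv⟩
    simp_all [A]
  have hAA₀ : ∀ v ∈ S, (v ∈ A ↔ v ∈ A₀) := by
    intro v hv
    simp [A, hv]
  have hA : ∀ u ∈ S, ∀ v ∈ S, G.Adj u v → (sign s(u, v) = true ↔ (u ∈ A ↔ v ∈ A)) := by
    intro u hu v hv huv
    rw [hAA₀ u hu, hAA₀ v hv]
    exact hA₀ u hu v hv huv
  have hsplit := le_balCount_add_balCount_symmDiff G sign S A hA
  have hA_le := balCount_le_beta G sign A
  have hAS_le := balCount_le_beta G sign (A ∆ S)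
  rw [betaOn, ← hB, ← hAB, balCount_induce, ncard_edgeSet_induce]
  omega

lemma three_le_ncard_edges_of_adj {a b c : V} (hab : G.Adj a b) (hbc : G.Adj b c)
    (hca : G.Adj c a) : 3 ≤ {e | e ∈ G.edgeSet ∧ ∀ v ∈ e, v ∈ ({a, b, c} : Set V)}.ncard := by
  have hsub : {s(a, b), s(b, c), s(c, a)} ⊆
      {e | e ∈ G.edgeSet ∧ ∀ v ∈ e, v ∈ ({a, b, c} : Set V)} := by
    rintro e (rfl | rfl | rfl) <;> simp [hab, hbc, hca]
  have h3 : ({s(a, b), s(b, c), s(c, a)} : Set (Sym2 V)).ncard = 3 := by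
    refine Set.ncard_eq_three.mpr ⟨_, _, _, ?_, ?_, ?_, rfl⟩ <;>
      simp [hab.ne, hbc.ne, hca.ne, hab.ne.symm, hca.ne.symm]
  exact h3 ▸ Set.ncard_le_ncard hsub (Set.toFinite _)

end Finite

lemma PositiveTriangle.isBalanced_induce {a b c : V} (h : PositiveTriangle G sign a b c) :
    IsBalanced (G.induce {a, b, c}) (fun e ↦ sign (e.map Subtype.val)) := by
  obtain ⟨hab, hbc, hca, heven⟩ := h
  have hsign : sign s(b, c) = true ↔ (sign s(a, b) = true ↔ sign s(c, a) = true) := by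
    revert heven
    cases sign s(a, b) <;> cases sign s(b, c) <;> cases sign s(c, a) <;> decide
  set A : Set V := {x | (x = b → sign s(a, b) = true) ∧ (x = c → sign s(c, a) = true)}
  have ha : a ∈ A := ⟨fun h ↦ absurd h hab.ne, fun h ↦ absurd h hca.ne.symm⟩
  have hb : b ∈ A ↔ sign s(a, b) = true := by simp [A, hbc.ne]
  have hc : c ∈ A ↔ sign s(c, a) = true := by simp [A, hbc.ne.symm]
  have hcons : ∀ e ∈ ({s(a, b), s(b, c), s(c, a)} : Set (Sym2 V)), SignConsistent sign A e := by
    rintro e (rfl | rfl | rfl) <;> rw [signConsistent_mk_iff] <;> simp only [ha, hb, hc, hsign] <;>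
      tauto
  refine (isBalanced_induce_iff G sign _).mpr
    ⟨A, fun u hu v hv huv ↦ (signConsistent_mk_iff sign A u v).mp (hcons _ ?_)⟩
  rcases hu with rfl | rfl | rfl <;> rcases hv with rfl | rfl | rfl <;>
    first
    | exact (huv.ne rfl).elim
    | simp [Sym2.eq_swap]

end SignedGraph

lemma SimpleGraph.Connected.card_connectedComponent {V : Type*} {G : SimpleGraph V}
    (h : G.Connected) : Nat.card G.ConnectedComponent = 1 :=
  Nat.card_eq_one_iff_unique.mpr
    ⟨h.preconnected.subsingleton_connectedComponent, h.nonempty.map G.connectedComponentMk⟩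

theorem stmt9_general {V : Type*} [Fintype V] (G : SimpleGraph V) (sign : Sym2 V → Bool)
    (a b c : V)
    (htri : PositiveTriangle G sign a b c)
    (hrest : (G.induce ({a, b, c}ᶜ : Set V)).Connected) :
    (beta G sign : ℚ) - pt G ≥
      (betaOn G sign ({a, b, c}ᶜ : Set V) : ℚ) - ptOn G ({a, b, c}ᶜ : Set V) + 3 / 4 := by
  have hβ := two_mul_betaOn_compl_add_le G sign {a, b, c} htri.isBalanced_induce
  have hS := three_le_ncard_edges_of_adj G htri.1 htri.2.1 htri.2.2.1
  have hn : Nat.card V ≤ Nat.card ↥({a, b, c}ᶜ : Set V) + 3 := by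
    rw [Nat.card_coe_set_eq, ← Set.ncard_add_ncard_compl {a, b, c}, add_comm]
    gcongr
    grw [Set.ncard_insert_le, Set.ncard_insert_le, Set.ncard_singleton]
  have : Nonempty G.ConnectedComponent := ⟨G.connectedComponentMk a⟩
  have ht : 1 ≤ Nat.card G.ConnectedComponent := Nat.card_pos
  rw [ge_iff_le, pt, ptOn, pt, hrest.card_connectedComponent, Nat.cast_one]
  qify at hβ hS hn ht
  linarith

/-- safety of Rule 1. If `a, b, c` form a positive triangle in a
connected signed graph `G` and `G − {a,b,c}` is connected and nonempty, then
`β(G) − pt(G) ≥ β(G − {a,b,c}) − pt(G − {a,b,c}) + 3/4`. -/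
theorem stmt9 {V : Type*} [Fintype V] (G : SimpleGraph V) (sign : Sym2 V → Bool)
    (hconn : G.Connected) (a b c : V) (hab : a ≠ b) (hbc : b ≠ c) (hac : a ≠ c)
    (htri : PositiveTriangle G sign a b c)
    (hrest : (G.induce ({a, b, c}ᶜ : Set V)).Connected) :
    (beta G sign : ℚ) - pt G ≥
      (betaOn G sign ({a, b, c}ᶜ : Set V) : ℚ) - ptOn G ({a, b, c}ᶜ : Set V) + 3 / 4 :=
  stmt9_general G sign a b c htri hrest
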